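/- For every natural number i > 0, ∫_0^{2/(3^i+1)} f(t) dt = (2^(i-1) / 9^i) · ((5·3^i + 1) / (2·3^i + 2)) · (1 / (1 + 2^(i-1)/9^i)). -/

import Mathlib

open intervalIntegral Set

/-!
Write `F a = ∫₀ᵃ f`. Substituting the three self-similarity equations gives
`F (a/3) = (2/9) F a`, `∫_{(2-a)/3}^{2/3} f = (a + F a)/9` and
`∫_{2/3}^{(2+a)/3} f = (a + 2 F a)/9`.
Splitting `[0,1]` at `1/3` and `2/3` yields `F 1 = 1/2`, hence `F (2/3) = 5/18`.
For `x = 2/(3^i+1)` the point `b = 3^(i-1) x` satisfies `(2 - x)/3 = b`, so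
`F x = (2/9)^(i-1) F b` and `F b + (x + F x)/9 = F (2/3) = 5/18`: a linear equation for `F x`.
-/

section SelfSimilar

variable {f : ℝ → ℝ}

theorem IntervalIntegrable.of_mem_Icc {μ : MeasureTheory.Measure ℝ} {a b c d : ℝ}
    (hf : IntervalIntegrable f μ a b) (hc : c ∈ Icc a b) (hd : d ∈ Icc a b) :
    IntervalIntegrable f μ c d :=
  hf.mono_set (uIcc_subset_uIcc (Icc_subset_uIcc hc) (Icc_subset_uIcc hd))

theorem integral_zero_div_three (hw1 : ∀ x ∈ Icc (0:ℝ) 1, f (x / 3) = (2/3) * f x)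
    {a : ℝ} (ha : a ∈ Icc (0:ℝ) 1) :
    ∫ t in (0:ℝ)..a / 3, f t = 2/9 * ∫ t in (0:ℝ)..a, f t := by
  have hsub := integral_comp_div (a := 0) (b := a) f (three_ne_zero (α := ℝ))
  rw [integral_congr fun x hx => hw1 x (uIcc_subset_Icc ⟨le_rfl, zero_le_one⟩ ha hx),
    integral_const_mul, zero_div, smul_eq_mul] at hsub
  linarith

theorem integral_zero_div_three_pow (hw1 : ∀ x ∈ Icc (0:ℝ) 1, f (x / 3) = (2/3) * f x)
    (k : ℕ) {a : ℝ} (ha : a ∈ Icc (0:ℝ) 1) :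
    ∫ t in (0:ℝ)..a / 3 ^ k, f t = (2/9) ^ k * ∫ t in (0:ℝ)..a, f t := by
  induction k generalizing a with
  | zero => simp
  | succ k ih =>
    have ha3 : a / 3 ∈ Icc (0:ℝ) 1 := ⟨by linarith [ha.1], by linarith [ha.2]⟩
    rw [pow_succ', ← div_div, ih ha3, integral_zero_div_three hw1 ha]
    ring

theorem integral_two_sub_div_three
    (hw2 : ∀ x ∈ Icc (0:ℝ) 1, f ((2 - x) / 3) = (1/3) * (1 + f x))
    {a : ℝ} (ha : a ∈ Icc (0:ℝ) 1) (hf : IntervalIntegrable f MeasureTheory.volume 0 a) :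
    ∫ t in (2 - a) / 3..2/3, f t = (a + ∫ t in (0:ℝ)..a, f t) / 9 := by
  have hsub := integral_comp_sub_div (a := 0) (b := a) f (three_ne_zero (α := ℝ)) (2/3)
  rw [integral_congr (g := fun x => 1/3 * (1 + f x)) fun x hx => by
      rw [show 2/3 - x/3 = (2 - x)/3 by ring,
        hw2 x (uIcc_subset_Icc ⟨le_rfl, zero_le_one⟩ ha hx)],
    integral_const_mul, integral_add intervalIntegrable_const hf, smul_eq_mul] at hsub
  simp only [integral_const, sub_zero, smul_eq_mul, mul_one, zero_div] at hsub
  rw [show (2 - a) / 3 = 2/3 - a/3 by ring]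
  linarith

theorem integral_two_add_div_three
    (hw3 : ∀ x ∈ Icc (0:ℝ) 1, f ((2 + x) / 3) = 1/3 + (2/3) * f x)
    {a : ℝ} (ha : a ∈ Icc (0:ℝ) 1) (hf : IntervalIntegrable f MeasureTheory.volume 0 a) :
    ∫ t in (2/3:ℝ)..(2 + a) / 3, f t = (a + 2 * ∫ t in (0:ℝ)..a, f t) / 9 := by
  have hsub := integral_comp_add_div (a := 0) (b := a) f (three_ne_zero (α := ℝ)) (2/3)
  rw [integral_congr (g := fun x => 1/3 + 2/3 * f x) fun x hx => by
      rw [show 2/3 + x/3 = (2 + x)/3 by ring,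
        hw3 x (uIcc_subset_Icc ⟨le_rfl, zero_le_one⟩ ha hx)],
    integral_add intervalIntegrable_const (hf.const_mul _), integral_const_mul,
    smul_eq_mul] at hsub
  simp only [integral_const, sub_zero, smul_eq_mul, zero_div, add_zero] at hsub
  rw [show (2 + a) / 3 = 2/3 + a/3 by ring]
  linarith

variable (hw1 : ∀ x ∈ Icc (0:ℝ) 1, f (x / 3) = (2/3) * f x)
  (hw2 : ∀ x ∈ Icc (0:ℝ) 1, f ((2 - x) / 3) = (1/3) * (1 + f x))
  (hw3 : ∀ x ∈ Icc (0:ℝ) 1, f ((2 + x) / 3) = 1/3 + (2/3) * f x)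
  (hf : IntervalIntegrable f MeasureTheory.volume 0 1)
include hw1 hw2 hw3 hf

theorem integral_zero_one_of_selfSimilar : ∫ t in (0:ℝ)..1, f t = 1/2 := by
  have h0 : (0:ℝ) ∈ Icc (0:ℝ) 1 := ⟨le_rfl, zero_le_one⟩
  have h1 : (1:ℝ) ∈ Icc (0:ℝ) 1 := ⟨zero_le_one, le_rfl⟩
  have h13 : (1/3:ℝ) ∈ Icc (0:ℝ) 1 := ⟨by norm_num, by norm_num⟩
  have h23 : (2/3:ℝ) ∈ Icc (0:ℝ) 1 := ⟨by norm_num, by norm_num⟩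
  have split : ∫ t in (0:ℝ)..1, f t = (∫ t in (0:ℝ)..1/3, f t) + (∫ t in (1/3:ℝ)..2/3, f t)
      + ∫ t in (2/3:ℝ)..1, f t := by
    rw [integral_add_adjacent_intervals (hf.of_mem_Icc h0 h13) (hf.of_mem_Icc h13 h23),
      integral_add_adjacent_intervals (hf.of_mem_Icc h0 h23) (hf.of_mem_Icc h23 h1)]
  have left := integral_zero_div_three hw1 h1
  have middle := integral_two_sub_div_three hw2 h1 hf
  have right := integral_two_add_div_three hw3 h1 hf
  norm_num at left middle right
  linarith

theorem integral_zero_two_thirds_of_selfSimilar : ∫ t in (0:ℝ)..2/3, f t = 5/18 := by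
  have h0 : (0:ℝ) ∈ Icc (0:ℝ) 1 := ⟨le_rfl, zero_le_one⟩
  have h1 : (1:ℝ) ∈ Icc (0:ℝ) 1 := ⟨zero_le_one, le_rfl⟩
  have h13 : (1/3:ℝ) ∈ Icc (0:ℝ) 1 := ⟨by norm_num, by norm_num⟩
  have h23 : (2/3:ℝ) ∈ Icc (0:ℝ) 1 := ⟨by norm_num, by norm_num⟩
  rw [← integral_add_adjacent_intervals (hf.of_mem_Icc h0 h13) (hf.of_mem_Icc h13 h23)]
  have left := integral_zero_div_three hw1 h1
  have middle := integral_two_sub_div_three hw2 h1 hf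
  rw [integral_zero_one_of_selfSimilar hw1 hw2 hw3 hf] at left middle
  norm_num at left middle
  linarith

theorem integral_zero_two_div_three_pow_succ_add_one (k : ℕ) :
    ((9/2) ^ k + 1/9) * ∫ t in (0:ℝ)..2 / (3 ^ (k + 1) + 1), f t
      = 5/18 - 2 / (9 * (3 ^ (k + 1) + 1)) := by
  set x : ℝ := 2 / (3 ^ (k + 1) + 1) with hx
  set b : ℝ := 3 ^ k * x with hb
  have h0 : (0:ℝ) ∈ Icc (0:ℝ) 1 := ⟨le_rfl, zero_le_one⟩
  have h23 : (2/3:ℝ) ∈ Icc (0:ℝ) 1 := ⟨by norm_num, by norm_num⟩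
  have h3k : (1:ℝ) ≤ 3 ^ k := one_le_pow₀ (by norm_num)
  have hxm : x ∈ Icc (0:ℝ) 1 := by
    refine ⟨by positivity, (div_le_one (by positivity)).2 ?_⟩
    rw [pow_succ]; linarith
  have hbm : b ∈ Icc (0:ℝ) 1 := by
    refine ⟨by positivity, ?_⟩
    rw [hb, hx, pow_succ, mul_div_assoc', div_le_one (by positivity)]
    linarith
  have hbx : b / 3 ^ k = x := by rw [hb]; field_simp
  have h2x : (2 - x) / 3 = b := by rw [hb, hx, pow_succ]; field_simp; ring
  have scale := integral_zero_div_three_pow hw1 k hbm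
  have tail := integral_two_sub_div_three hw2 hxm (hf.of_mem_Icc h0 hxm)
  have split := integral_add_adjacent_intervals (hf.of_mem_Icc h0 hbm) (hf.of_mem_Icc hbm h23)
  rw [hbx] at scale
  rw [h2x] at tail
  rw [tail, integral_zero_two_thirds_of_selfSimilar hw1 hw2 hw3 hf] at split
  have hinv : ((9:ℝ)/2) ^ k * (2/9) ^ k = 1 := by rw [← mul_pow]; norm_num
  have hFb : ∫ t in (0:ℝ)..b, f t = (9/2) ^ k * ∫ t in (0:ℝ)..x, f t := by
    rw [scale, ← mul_assoc, hinv, one_mul]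
  rw [hFb] at split
  have hxdiv : x / 9 = 2 / (9 * (3 ^ (k + 1) + 1)) := by rw [hx]; field_simp
  linarith

end SelfSimilar

theorem bourbaki_stmt_general (f : ℝ → ℝ)
    (hcont : ContinuousOn f (Set.Icc 0 1))
    (hw1 : ∀ x ∈ Set.Icc (0:ℝ) 1, f (x / 3) = (2/3) * f x)
    (hw2 : ∀ x ∈ Set.Icc (0:ℝ) 1, f ((2 - x) / 3) = (1/3) * (1 + f x))
    (hw3 : ∀ x ∈ Set.Icc (0:ℝ) 1, f ((2 + x) / 3) = 1/3 + (2/3) * f x) :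
    ∀ i : ℕ, 0 < i → ∫ t in (0:ℝ)..(2 / (3 ^ i + 1)), f t = (2 ^ (i - 1) / 9 ^ i) * ((5 * 3 ^ i + 1) / (2 * 3 ^ i + 2)) * (1 / (1 + 2 ^ (i - 1) / 9 ^ i)) := by
  rintro i hi
  obtain ⟨k, rfl⟩ : ∃ k, i = k + 1 := ⟨i - 1, by omega⟩
  have key := integral_zero_two_div_three_pow_succ_add_one hw1 hw2 hw3
    (hcont.intervalIntegrable_of_Icc zero_le_one) k
  rw [mul_comm, ← eq_div_iff (by positivity)] at key
  rw [Nat.add_sub_cancel, key, div_pow, pow_succ, pow_succ]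
  field_simp
  ring

theorem bourbaki_stmt (f : ℝ → ℝ)
    (hcont : ContinuousOn f (Set.Icc 0 1))
    (h0 : f 0 = 0) (h1 : f 1 = 1)
    (hw1 : ∀ x ∈ Set.Icc (0:ℝ) 1, f (x / 3) = (2/3) * f x)
    (hw2 : ∀ x ∈ Set.Icc (0:ℝ) 1, f ((2 - x) / 3) = (1/3) * (1 + f x))
    (hw3 : ∀ x ∈ Set.Icc (0:ℝ) 1, f ((2 + x) / 3) = 1/3 + (2/3) * f x) :
    ∀ i : ℕ, 0 < i → ∫ t in (0:ℝ)..(2 / (3 ^ i + 1)), f t = (2 ^ (i - 1) / 9 ^ i) * ((5 * 3 ^ i + 1) / (2 * 3 ^ i + 2)) * (1 / (1 + 2 ^ (i - 1) / 9 ^ i)) :=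
  bourbaki_stmt_general f hcont hw1 hw2 hw3
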